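/- Let S be an independent set of size d in Cycle_n (vertex set ℤ/nℤ), let S-1 = {s-1 : s ∈ S}, and let R = (ℤ/nℤ) \\ (S-1). Let β_S be the acyclic orientation of Cycle_n whose sources are the elements of S and all of whose other edges are oriented clockwise (so its sinks are the elements of S-1). Then as operators on labelings of any graph G with n vertices: cyc ∘ Bro_R ∘ TPro_{β_S} = TPro_{β_S} ∘ cyc ∘ Bro_R. -/

import Mathlib

open scoped Classical

noncomputable def toggle {V : Type*} {n : ℕ} (G : SimpleGraph V) (i : ZMod n)
    (σ : V ≃ ZMod n) : V ≃ ZMod n :=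
  if G.Adj (σ.symm i) (σ.symm (i + 1)) then σ else σ.trans (Equiv.swap i (i + 1))

noncomputable def applyToggles {V : Type*} {n : ℕ} (G : SimpleGraph V)
    (L : List (ZMod n)) (σ : V ≃ ZMod n) : V ≃ ZMod n :=
  L.foldl (fun τ i => toggle G i τ) σ

noncomputable def tpro {V : Type*} {n : ℕ} (G : SimpleGraph V) (π : Fin n ≃ ZMod n)
    (σ : V ≃ ZMod n) : V ≃ ZMod n :=
  applyToggles G (List.ofFn fun k => π k) σ

def cycShift {V : Type*} {n : ℕ} (σ : V ≃ ZMod n) : V ≃ ZMod n :=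
  σ.trans (Equiv.addRight (1 : ZMod n))

noncomputable def broList {n : ℕ} (B : Finset (ZMod n)) (c : ZMod n) : List (ZMod n) :=
  ((List.range n).map (fun j => c + 1 + (j : ZMod n))).filter (· ∈ B)

noncomputable def cycBro {V : Type*} {n : ℕ} (G : SimpleGraph V) (B : Finset (ZMod n))
    (c : ZMod n) (σ : V ≃ ZMod n) : V ≃ ZMod n :=
  cycShift (applyToggles G (broList B c) σ)

def linExt {n : ℕ} (o : ZMod n → Bool) (π : Fin n ≃ ZMod n) : Prop :=
  ∀ a : ZMod n, if o a then π.symm a < π.symm (a + 1) else π.symm (a + 1) < π.symm a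

/-!
Toggles `τ a` and `τ b` commute unless `a` and `b` are adjacent on the cycle, so two orders of
the same toggles give the same composite as soon as they order every pair `a, a + 1` alike; in
particular `TPro_{β_S}` may be computed along any linear extension of `β_S`. Let `R'` be the
toggles of `R` in Bro order and `K` those of `S - 1`. Since `Bro_R` reads `R` cyclically starting
at `s₀ ∈ S`, "`R'` then `K`" is a linear extension of `β_S`, while conjugating by `cyc` lowers every
toggle index by one and turns `TPro_{β_S}` into a product along which "`K` then `R'`" is a linear
extension. Both sides are therefore `cyc ∘ Bro_R ∘ τ_K ∘ Bro_R`.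
-/

open scoped List

namespace List

variable {α β : Type*} {l : List α} {a b : α}

theorem Nodup.not_pair_sublist_of_pair_sublist (hl : l.Nodup) (h : [a, b] <+ l) :
    ¬[b, a] <+ l := by
  induction l with
  | nil => simp
  | cons c l ih =>
    rw [nodup_cons] at hl
    rw [sublist_cons_iff] at h ⊢
    grind [Sublist.subset]

theorem pair_sublist_or_pair_sublist (ha : a ∈ l) (hb : b ∈ l) (hab : a ≠ b) :
    [a, b] <+ l ∨ [b, a] <+ l := by
  induction l with
  | nil => simp at ha
  | cons c l ih =>
    simp only [sublist_cons_iff]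
    grind

theorem Pairwise.pair_sublist_iff_lt {γ : Type*} [Preorder γ] {r : α → γ}
    (hl : l.Pairwise fun x y => r x < r y) (ha : a ∈ l) (hb : b ∈ l) (hab : a ≠ b) :
    [a, b] <+ l ↔ r a < r b := by
  refine ⟨fun h => by simpa using hl.sublist h, fun hlt => ?_⟩
  refine (pair_sublist_or_pair_sublist ha hb hab).resolve_right fun h => ?_
  exact (by simpa using hl.sublist h : r b < r a).not_gt hlt

theorem pair_sublist_append_iff {l₁ l₂ : List α} :
    [a, b] <+ l₁ ++ l₂ ↔ [a, b] <+ l₁ ∨ a ∈ l₁ ∧ b ∈ l₂ ∨ [a, b] <+ l₂ := by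
  rw [sublist_append_iff]
  constructor
  · rintro ⟨l₁', l₂', h, h₁, h₂⟩
    rcases l₁' with _ | ⟨x, _ | ⟨y, _ | _⟩⟩ <;> grind
  · rintro (h | ⟨ha, hb⟩ | h)
    · exact ⟨[a, b], [], by simp, h, nil_sublist _⟩
    · exact ⟨[a], [b], rfl, by simpa, by simpa⟩
    · exact ⟨[], [a, b], rfl, nil_sublist _, h⟩

theorem foldl_append_cons_of_commute {f : β → α → β} {x : α} {P : List α}
    (h : ∀ y ∈ P, Function.Commute (f · x) (f · y)) (Q : List α) (s : β) :
    (P ++ x :: Q).foldl f s = (P ++ Q).foldl f (f s x) := by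
  induction P generalizing s with
  | nil => rfl
  | cons y P ih =>
    simp only [cons_append, foldl_cons]
    rw [ih fun z hz => h z (mem_cons_of_mem y hz)]
    exact congrArg (foldl f · _) (h y mem_cons_self s)

theorem foldl_eq_of_perm_of_pair_sublist {f : β → α → β} {l₁ l₂ : List α} (hp : l₁ ~ l₂)
    (hl₁ : l₁.Nodup)
    (h : ∀ a b, ¬Function.Commute (f · a) (f · b) → [a, b] <+ l₁ → [a, b] <+ l₂) (s : β) :
    l₁.foldl f s = l₂.foldl f s := by
  induction l₁ generalizing l₂ s with
  | nil => rw [hp.nil_eq]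
  | cons x T ih =>
    obtain ⟨hxT, hT⟩ := nodup_cons.1 hl₁
    obtain ⟨P, Q, rfl⟩ := append_of_mem (hp.subset mem_cons_self)
    have hl₂ := hp.nodup hl₁
    have hxP : x ∉ P := fun hxP => (nodup_append.1 hl₂).2.2 x hxP x mem_cons_self rfl
    have hcomm : ∀ y ∈ P, Function.Commute (f · x) (f · y) := by
      intro y hy
      by_contra hc
      have hyT : y ∈ T := by
        have := hp.symm.subset (mem_append_left _ hy)
        grind
      refine hl₂.not_pair_sublist_of_pair_sublist ?_ (h x y hc ?_)
      · exact Sublist.append (singleton_sublist.2 hy) (singleton_sublist.2 mem_cons_self)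
      · exact (singleton_sublist.2 hyT).cons_cons x
    rw [foldl_cons, foldl_append_cons_of_commute hcomm]
    refine ih (perm_middle.symm.trans hp.symm).cons_inv.symm hT (fun a b hab hsub => ?_) _
    have hsub' := (h a b hab (hsub.cons x)).erase x
    rwa [erase_of_not_mem (by grind [Sublist.subset]), erase_append_right _ hxP,
      erase_cons_head] at hsub'

end List

section Toggle

variable {V : Type*} {n : ℕ} (G : SimpleGraph V)

theorem toggle_eq_trans (i : ZMod n) (σ : V ≃ ZMod n) :
    toggle G i σ = σ.trans
      (if G.Adj (σ.symm i) (σ.symm (i + 1)) then Equiv.refl _ else Equiv.swap i (i + 1)) := by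
  unfold toggle
  split_ifs <;> rfl

theorem toggle_symm_apply_of_ne {i x : ZMod n} (hx : x ≠ i) (hx' : x ≠ i + 1)
    (σ : V ≃ ZMod n) : (toggle G i σ).symm x = σ.symm x := by
  rw [toggle_eq_trans]
  split_ifs <;> simp [Equiv.swap_apply_of_ne_of_ne hx hx']

theorem commute_toggle {a b : ZMod n} (h : [a, a + 1, b, b + 1].Nodup) :
    Function.Commute (toggle G a) (toggle G b) := by
  intro σ
  have hswap : Commute (Equiv.swap a (a + 1)) (Equiv.swap b (b + 1)) :=
    (Equiv.Perm.disjoint_swap_swap h).commute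
  simp only [List.nodup_cons, List.mem_cons, List.not_mem_nil] at h
  rw [toggle_eq_trans G a (toggle G b σ), toggle_eq_trans G b (toggle G a σ),
    toggle_symm_apply_of_ne G (x := a) (by grind) (by grind),
    toggle_symm_apply_of_ne G (x := a + 1) (by grind) (by grind),
    toggle_symm_apply_of_ne G (x := b) (by grind) (by grind),
    toggle_symm_apply_of_ne G (x := b + 1) (by grind) (by grind),
    toggle_eq_trans G a, toggle_eq_trans G b, Equiv.trans_assoc, Equiv.trans_assoc]
  congr 1
  split_ifs
  exacts [rfl, rfl, rfl, hswap.eq]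

theorem toggle_cycShift (i : ZMod n) (σ : V ≃ ZMod n) :
    toggle G i (cycShift σ) = cycShift (toggle G (i - 1) σ) := by
  have hsymm : ∀ x, (cycShift σ).symm x = σ.symm (x - 1) := fun x => by
    simp [cycShift, sub_eq_add_neg]
  rw [toggle_eq_trans, toggle_eq_trans, hsymm, hsymm, add_sub_cancel_right, sub_add_cancel]
  split_ifs
  · rfl
  · ext v
    simp only [cycShift, Equiv.trans_apply, Equiv.coe_addRight, Equiv.swap_apply_def]
    split_ifs <;> grind

theorem applyToggles_append (l₁ l₂ : List (ZMod n)) (σ : V ≃ ZMod n) :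
    applyToggles G (l₁ ++ l₂) σ = applyToggles G l₂ (applyToggles G l₁ σ) :=
  List.foldl_append

theorem applyToggles_cycShift (l : List (ZMod n)) (σ : V ≃ ZMod n) :
    applyToggles G l (cycShift σ) = cycShift (applyToggles G (l.map (· - 1)) σ) := by
  induction l generalizing σ with
  | nil => rfl
  | cons i l ih => exact (congrArg (applyToggles G l) (toggle_cycShift G i σ)).trans (ih _)

theorem eq_or_adjacent_of_not_commute_toggle {a b : ZMod n}
    (h : ¬Function.Commute (toggle G a) (toggle G b)) : a = b ∨ b = a + 1 ∨ a = b + 1 := by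
  by_contra! hne
  obtain ⟨hab, hb, ha⟩ := hne
  have : Nontrivial (ZMod n) := ⟨a, b, hab⟩
  exact h (commute_toggle G (by simp [hab, ha, hb.symm]))

theorem applyToggles_eq_of_perm {l₁ l₂ : List (ZMod n)} (hp : l₁ ~ l₂) (hl₁ : l₁.Nodup)
    (h : ∀ a, [a, a + 1] <+ l₁ ↔ [a, a + 1] <+ l₂) (σ : V ≃ ZMod n) :
    applyToggles G l₁ σ = applyToggles G l₂ σ := by
  refine List.foldl_eq_of_perm_of_pair_sublist hp hl₁ (fun a b hab hsub => ?_) σ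
  rcases eq_or_adjacent_of_not_commute_toggle G hab with rfl | rfl | rfl
  · exact absurd hsub (hl₁.not_pair_sublist_of_pair_sublist hsub)
  · exact (h a).1 hsub
  · have hne : b + 1 ≠ b := by
      intro he
      rw [he] at hsub
      exact hl₁.not_pair_sublist_of_pair_sublist hsub hsub
    refine (List.pair_sublist_or_pair_sublist (hp.subset (hsub.subset (by simp)))
      (hp.subset (hsub.subset (by simp))) hne).resolve_right fun h' => ?_
    exact hl₁.not_pair_sublist_of_pair_sublist hsub ((h b).2 h')

end Toggle

theorem ZMod.val_add_one_of_ne_zero {n : ℕ} [NeZero n] {x : ZMod n} (hx : x + 1 ≠ 0) :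
    (x + 1).val = x.val + 1 := by
  have hlt : x.val + 1 < n := by
    refine (Nat.succ_le_of_lt x.val_lt).lt_of_ne fun h => hx ?_
    rw [← ZMod.natCast_zmod_val x, ← Nat.cast_succ, h, ZMod.natCast_self]
  rw [← ZMod.val_cast_of_lt hlt, Nat.cast_succ, ZMod.natCast_zmod_val]

section BroList

variable {n : ℕ} (B : Finset (ZMod n)) (c : ZMod n)

theorem broList_eq_filter :
    broList B c = ((List.range n).map fun j : ℕ => c + 1 + (j : ZMod n)).filter (· ∈ B) := by
  simp only [broList, List.pure_def, List.bind_eq_flatMap, ← List.map_eq_flatMap, List.map_map]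
  rfl

theorem mem_broList [NeZero n] {x : ZMod n} : x ∈ broList B c ↔ x ∈ B := by
  simp only [broList_eq_filter, List.mem_filter, List.mem_map, List.mem_range,
    decide_eq_true_eq, and_iff_right_iff_imp]
  exact fun _ => ⟨(x - (c + 1)).val, ZMod.val_lt _, by rw [ZMod.natCast_zmod_val]; ring⟩

theorem pairwise_broList [NeZero n] :
    (broList B c).Pairwise fun x y => (x - (c + 1)).val < (y - (c + 1)).val := by
  rw [broList_eq_filter]
  refine (List.pairwise_map.2 (List.pairwise_lt_range.imp_of_mem fun hi hj hij => ?_)).filter _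
  rw [List.mem_range] at hi hj
  rwa [add_sub_cancel_left, add_sub_cancel_left, ZMod.val_cast_of_lt hi, ZMod.val_cast_of_lt hj]

theorem nodup_broList [NeZero n] : (broList B c).Nodup :=
  (pairwise_broList B c).imp fun h he => h.ne (by rw [he])

theorem pair_sublist_broList [NeZero n] {a : ZMod n} (ha : a ∈ B) (ha' : a + 1 ∈ B)
    (hac : a ≠ c) : [a, a + 1] <+ broList B c := by
  have hne : a - (c + 1) + 1 ≠ 0 := fun h => hac (by linear_combination h)
  have hsucc : a + 1 - (c + 1) = a - (c + 1) + 1 := by ring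
  rw [(pairwise_broList B c).pair_sublist_iff_lt ((mem_broList B c).2 ha)
    ((mem_broList B c).2 ha') fun h => hne (by linear_combination (c - a) * h), hsucc,
    ZMod.val_add_one_of_ne_zero hne]
  exact Nat.lt_succ_self _

end BroList

section LinExt

variable {n : ℕ} {o : ZMod n → Bool} {π : Fin n ≃ ZMod n}

theorem pair_sublist_ofFn_iff_of_linExt (hπ : linExt o π) (a : ZMod n) :
    [a, a + 1] <+ List.ofFn (fun k => π k) ↔ o a = true := by
  have hl : (List.ofFn fun k => π k).Pairwise fun x y => π.symm x < π.symm y :=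
    List.pairwise_ofFn.2 fun i j hij => by simpa using hij
  have hmem : ∀ x, x ∈ List.ofFn fun k => π k := fun x => List.mem_ofFn.2 ⟨π.symm x, by simp⟩
  have ha := hπ a
  have hne : a ≠ a + 1 := fun h => by rw [← h] at ha; split_ifs at ha <;> exact lt_irrefl _ ha
  rw [hl.pair_sublist_iff_lt (hmem a) (hmem (a + 1)) hne]
  split_ifs at ha with h
  · exact iff_of_true ha h
  · exact iff_of_false ha.asymm h

theorem linExt.trans_subRight_one (hπ : linExt o π) :
    linExt (fun a => o (a + 1)) (π.trans (Equiv.subRight 1)) := by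
  intro a
  simpa [Equiv.symm_trans_apply] using hπ (a + 1)

end LinExt

section SourcesAndSinks

variable {n : ℕ} {S : Finset (ZMod n)} {s₀ : ZMod n}

theorem mem_toList_image_sub_one {x : ZMod n} : x ∈ (S.image (· - 1)).toList ↔ x + 1 ∈ S := by
  simp [sub_eq_iff_eq_add]

variable [NeZero n]

theorem mem_univ_sdiff_image_sub_one {x : ZMod n} :
    x ∈ Finset.univ \ S.image (· - 1) ↔ x + 1 ∉ S := by
  simp [sub_eq_iff_eq_add]

theorem nodup_broList_append_toList (c : ZMod n) :
    (broList (Finset.univ \ S.image (· - 1)) c ++ (S.image (· - 1)).toList).Nodup :=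
  (nodup_broList _ c).append (Finset.nodup_toList _) fun _ hB hK =>
    mem_univ_sdiff_image_sub_one.1 ((mem_broList _ c).1 hB) (mem_toList_image_sub_one.1 hK)

theorem mem_broList_append_toList (c x : ZMod n) :
    x ∈ broList (Finset.univ \ S.image (· - 1)) c ++ (S.image (· - 1)).toList := by
  rw [List.mem_append, mem_broList, mem_univ_sdiff_image_sub_one, mem_toList_image_sub_one]
  exact em' _

theorem ofFn_perm_broList_append_toList (π : Fin n ≃ ZMod n) (c : ZMod n) :
    (List.ofFn fun k => π k) ~
      broList (Finset.univ \ S.image (· - 1)) c ++ (S.image (· - 1)).toList :=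
  (List.perm_ext_iff_of_nodup (List.nodup_ofFn.2 π.injective)
    (nodup_broList_append_toList c)).2 fun x =>
      iff_of_true (List.mem_ofFn.2 ⟨π.symm x, π.apply_symm_apply x⟩)
        (mem_broList_append_toList c x)

theorem pair_sublist_broList_univ_sdiff (hs₀ : s₀ ∈ S) {a : ZMod n}
    (ha : a + 1 ∉ S) (ha' : a + 1 + 1 ∉ S) :
    [a, a + 1] <+ broList (Finset.univ \ S.image (· - 1)) (s₀ - 1) := by
  refine pair_sublist_broList _ _ (mem_univ_sdiff_image_sub_one.2 ha)
    (mem_univ_sdiff_image_sub_one.2 ha') fun h => ha ?_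
  rwa [h, sub_add_cancel]

theorem pair_sublist_broList_append_iff (hind : ∀ s ∈ S, s + 1 ∉ S) (hs₀ : s₀ ∈ S)
    (a : ZMod n) :
    [a, a + 1] <+ broList (Finset.univ \ S.image (· - 1)) (s₀ - 1) ++ (S.image (· - 1)).toList
      ↔ a + 1 ∉ S := by
  simp only [List.pair_sublist_append_iff, mem_broList, mem_univ_sdiff_image_sub_one,
    mem_toList_image_sub_one]
  by_cases h1 : a + 1 ∈ S
  · refine iff_of_false ?_ (not_not.2 h1)
    rintro (h | ⟨ha, -⟩ | h)
    · exact mem_univ_sdiff_image_sub_one.1 ((mem_broList _ _).1 (h.subset (by simp))) h1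
    · exact ha h1
    · exact hind _ h1 (mem_toList_image_sub_one.1 (h.subset (by simp : a + 1 ∈ [a, a + 1])))
  · refine iff_of_true ?_ h1
    by_cases h2 : a + 1 + 1 ∈ S
    · exact Or.inr (Or.inl ⟨h1, h2⟩)
    · exact Or.inl (pair_sublist_broList_univ_sdiff hs₀ h1 h2)

theorem pair_sublist_append_broList_iff (hind : ∀ s ∈ S, s + 1 ∉ S) (hs₀ : s₀ ∈ S)
    (a : ZMod n) :
    [a, a + 1] <+ (S.image (· - 1)).toList ++ broList (Finset.univ \ S.image (· - 1)) (s₀ - 1)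
      ↔ a + 1 + 1 ∉ S := by
  simp only [List.pair_sublist_append_iff, mem_broList, mem_univ_sdiff_image_sub_one,
    mem_toList_image_sub_one]
  by_cases h1 : a + 1 ∈ S
  · exact iff_of_true (Or.inr (Or.inl ⟨h1, hind _ h1⟩)) (hind _ h1)
  by_cases h2 : a + 1 + 1 ∈ S
  · refine iff_of_false ?_ (not_not.2 h2)
    rintro (h | ⟨ha, -⟩ | h)
    · exact h1 (mem_toList_image_sub_one.1 (h.subset (by simp)))
    · exact h1 ha
    · exact mem_univ_sdiff_image_sub_one.1
        ((mem_broList _ _).1 (h.subset (by simp : a + 1 ∈ [a, a + 1]))) h2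
  · exact iff_of_true (Or.inr (Or.inr (pair_sublist_broList_univ_sdiff hs₀ h1 h2))) h2

end SourcesAndSinks

theorem stmt16_general {V : Type*} (n : ℕ) [NeZero n]
    (G : SimpleGraph V) (S : Finset (ZMod n))
    (hind : ∀ s ∈ S, s + 1 ∉ S)
    (π : Fin n ≃ ZMod n) (hπ : linExt (fun i : ZMod n => decide ((i + 1) ∉ S)) π)
    (s₀ : ZMod n) (hs₀ : s₀ ∈ S) (σ : V ≃ ZMod n) :
    cycBro G (Finset.univ \ S.image (· - 1)) (s₀ - 1) (tpro G π σ)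
      = tpro G π (cycBro G (Finset.univ \ S.image (· - 1)) (s₀ - 1) σ) := by
  set B := broList (Finset.univ \ S.image (· - 1)) (s₀ - 1)
  set K := (S.image (· - 1)).toList
  have hBK (τ : V ≃ ZMod n) :
      applyToggles G (List.ofFn fun k => π k) τ = applyToggles G (B ++ K) τ := by
    refine applyToggles_eq_of_perm G (ofFn_perm_broList_append_toList π _)
      (List.nodup_ofFn.2 π.injective) (fun a => ?_) τ
    rw [pair_sublist_ofFn_iff_of_linExt hπ, pair_sublist_broList_append_iff hind hs₀,
      decide_eq_true_iff]
  have hKB (τ : V ≃ ZMod n) :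
      applyToggles G ((List.ofFn fun k => π k).map (· - 1)) τ = applyToggles G (K ++ B) τ := by
    set π' := π.trans (Equiv.subRight 1)
    rw [List.map_ofFn]
    refine applyToggles_eq_of_perm G
      ((ofFn_perm_broList_append_toList π' _).trans List.perm_append_comm)
      (List.nodup_ofFn.2 π'.injective) (fun a => ?_) τ
    rw [pair_sublist_ofFn_iff_of_linExt hπ.trans_subRight_one,
      pair_sublist_append_broList_iff hind hs₀, decide_eq_true_iff]
  simp only [cycBro, tpro]
  rw [applyToggles_cycShift, hBK, hKB, applyToggles_append, applyToggles_append]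

theorem stmt16 {V : Type*} [Fintype V] (n : ℕ) [NeZero n] (hcard : Fintype.card V = n)
    (G : SimpleGraph V) (S : Finset (ZMod n)) (d : ℕ) (hSd : S.card = d) (hd : 1 ≤ d)
    (hind : ∀ s ∈ S, s + 1 ∉ S)
    (π : Fin n ≃ ZMod n) (hπ : linExt (fun i : ZMod n => decide ((i + 1) ∉ S)) π)
    (s₀ : ZMod n) (hs₀ : s₀ ∈ S) (σ : V ≃ ZMod n) :
    cycBro G (Finset.univ \ S.image (· - 1)) (s₀ - 1) (tpro G π σ)
      = tpro G π (cycBro G (Finset.univ \ S.image (· - 1)) (s₀ - 1) σ) :=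
  stmt16_general n G S hind π hπ s₀ hs₀ σ
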